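/- arXiv:cs/0408038 — 10 statements merged into one kernel-verified Lean document; each statement's English description precedes it below -/
import Mathlib

section
/- Let C ≤ W = ∏_{k∈I} G_k be a subgroup (I finite, G_k abelian), and J ⊆ I with complement I∖J. Define the state space Σ_J(C) = C / (C_{:J} × C_{:I∖J}), where C_{:J} (resp. C_{:I∖J}) is the subgroup of C supported on J (resp. I∖J). Then C_{|J} / C_{|:J} ≅ Σ_J(C) ≅ C_{|I∖J} / C_{|:I∖J}, where C_{|:J} denotes the restriction to J of C_{:J}. -/
/-- The restriction homomorphism from a product group to the product over the coordinates
satisfying a predicate `p`. -/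
def restrictHom {I : Type*} (G : I → Type*) [∀ k, AddCommGroup (G k)] (p : I → Prop) :
    (∀ k, G k) →+ (∀ k : Subtype p, G k.1) where
  toFun w k := w k.1
  map_zero' := rfl
  map_add' _ _ := rfl

lemma aux {W A B : Type*} [AddCommGroup W] [AddCommGroup A] [AddCommGroup B]
    (r : W →+ A) (s : W →+ B) (C : AddSubgroup W) :
    Nonempty ((↥(C.map r) ⧸ ((C ⊓ s.ker).map r).addSubgroupOf (C.map r)) ≃+
      (↥C ⧸ ((C ⊓ s.ker) ⊔ (C ⊓ r.ker)).addSubgroupOf C)) := by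
  set N := ((C ⊓ s.ker).map r).addSubgroupOf (C.map r)
  let f : C →+ C.map r :=
    { toFun := fun c => ⟨r c, ⟨c, c.2, rfl⟩⟩
      map_zero' := by ext; simp
      map_add' := fun x y => by ext; simp }
  let g := (QuotientAddGroup.mk' N).comp f
  have hsurj : Function.Surjective g := by
    rintro ⟨⟨a, c, hc, rfl⟩⟩
    exact ⟨⟨c, hc⟩, rfl⟩
  have hker : g.ker = ((C ⊓ s.ker) ⊔ (C ⊓ r.ker)).addSubgroupOf C := by
    ext c
    simp only [AddMonoidHom.mem_ker, g, AddMonoidHom.comp_apply,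
      QuotientAddGroup.mk'_apply, QuotientAddGroup.eq_zero_iff]
    constructor
    · rintro h
      have : (f c : A) ∈ (C ⊓ s.ker).map r := h
      rw [AddSubgroup.mem_map] at this
      obtain ⟨c', hc', hrc⟩ := this
      have hfc : (f c : A) = r c := rfl
      rw [AddSubgroup.mem_inf] at hc'
      have h1 : (c : W) - c' ∈ C ⊓ r.ker := by
        rw [AddSubgroup.mem_inf]
        refine ⟨sub_mem c.2 hc'.1, ?_⟩
        rw [AddMonoidHom.mem_ker, map_sub, hrc, hfc, sub_self]
      have heq : (c : W) = c' + ((c : W) - c') := by abel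
      show (c : W) ∈ (C ⊓ s.ker) ⊔ (C ⊓ r.ker)
      rw [heq]
      have hc'' : c' ∈ C ⊓ s.ker := by rw [AddSubgroup.mem_inf]; exact hc'
      exact AddSubgroup.add_mem_sup hc'' h1
    · intro h
      have h' : (c : W) ∈ (C ⊓ s.ker) ⊔ (C ⊓ r.ker) := h
      rw [AddSubgroup.mem_sup] at h'
      obtain ⟨y, hy, z, hz, hyz⟩ := h'
      show (f c : A) ∈ (C ⊓ s.ker).map r
      refine ⟨y, hy, ?_⟩
      have : r z = 0 := hz.2
      simp only [f, AddMonoidHom.coe_mk, ZeroHom.coe_mk]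
      rw [← hyz, map_add, this, add_zero]
  exact ⟨((QuotientAddGroup.quotientAddEquivOfEq hker).symm.trans
    (QuotientAddGroup.quotientKerEquivOfSurjective g hsurj)).symm⟩

/-- One-sided state space theorem (algebraic version): with `C_{:J} = C ⊓ ker(restriction
to I∖J)`, `C_{:I∖J} = C ⊓ ker(restriction to J)`, `Σ_J(C) = C / (C_{:J} + C_{:I∖J})`,
one has `C_{|J} / C_{|:J} ≅ Σ_J(C) ≅ C_{|I∖J} / C_{|:I∖J}`. -/
theorem stmt8 {I : Type*} [Fintype I] (G : I → Type*) [∀ k, AddCommGroup (G k)]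
    (C : AddSubgroup (∀ k, G k)) (J : Set I) :
    Nonempty
      ((↥(C.map (restrictHom G (· ∈ J))) ⧸
          ((C ⊓ (restrictHom G (· ∉ J)).ker).map (restrictHom G (· ∈ J))).addSubgroupOf
            (C.map (restrictHom G (· ∈ J)))) ≃+
        (↥C ⧸ (((C ⊓ (restrictHom G (· ∉ J)).ker) ⊔
            (C ⊓ (restrictHom G (· ∈ J)).ker)).addSubgroupOf C))) ∧
    Nonempty
      ((↥(C.map (restrictHom G (· ∉ J))) ⧸
          ((C ⊓ (restrictHom G (· ∈ J)).ker).map (restrictHom G (· ∉ J))).addSubgroupOf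
            (C.map (restrictHom G (· ∉ J)))) ≃+
        (↥C ⧸ (((C ⊓ (restrictHom G (· ∉ J)).ker) ⊔
            (C ⊓ (restrictHom G (· ∈ J)).ker)).addSubgroupOf C))) := by
  refine ⟨aux _ _ C, ?_⟩
  rw [sup_comm]
  exact aux (restrictHom G (· ∉ J)) (restrictHom G (· ∈ J)) C
end

section
/- Let C and C^⊥ be dual subgroups of W = ∏_{k∈I} G_k and Ŵ = ∏_{k∈I} Ĝ_k (all G_k finite abelian, I finite), and let J ⊆ I. Then the one-sided state space (C^⊥)_{|J} / (C^⊥)_{|:J} is isomorphic to the character group of the one-sided state space C_{|J} / C_{|:J}. In particular, since finite abelian groups are isomorphic to their character groups, Σ_J(C) ≅ Σ_J(C^⊥). -/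
open Function DirectSum

namespace Stmt9Aux

local notation "𝕋" => AddCircle (1 : ℚ)

noncomputable section

abbrev mkQ : ℚ →+ 𝕋 := QuotientAddGroup.mk' (AddSubgroup.zmultiples (1 : ℚ))

lemma mkQ_int (z : ℤ) : mkQ (z : ℚ) = 0 :=
  (QuotientAddGroup.eq_zero_iff _).mpr ⟨z, by simp⟩

def zmodEmb (n : ℕ) : ZMod n →+ 𝕋 :=
  ZMod.lift n ⟨mkQ.comp (zmultiplesHom ℚ ((n : ℚ)⁻¹)), by
    show mkQ (((n : ℕ) : ℤ) • (n : ℚ)⁻¹) = 0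
    rcases eq_or_ne n 0 with h | h
    · simp [h]
    · have h1 : ((n : ℕ) : ℤ) • (n : ℚ)⁻¹ = ((1 : ℤ) : ℚ) := by
        rw [zsmul_eq_mul]
        push_cast
        field_simp
      rw [h1, mkQ_int]⟩

lemma zmodEmb_intCast (n : ℕ) (z : ℤ) :
    zmodEmb n ((z : ZMod n)) = mkQ (z • (n : ℚ)⁻¹) := by
  rw [zmodEmb, ZMod.lift_coe]
  rfl

lemma zmodEmb_inj (n : ℕ) (hn : n ≠ 0) : Injective (zmodEmb n) := by
  rw [injective_iff_map_eq_zero]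
  intro a ha
  obtain ⟨z, rfl⟩ := ZMod.intCast_surjective a
  rw [zmodEmb_intCast] at ha
  rw [ZMod.intCast_zmod_eq_zero_iff_dvd]
  obtain ⟨k, hk⟩ := AddSubgroup.mem_zmultiples_iff.mp ((QuotientAddGroup.eq_zero_iff _).mp ha)
  rw [zsmul_eq_mul, zsmul_eq_mul, mul_one] at hk
  have hnQ : (n : ℚ) ≠ 0 := Nat.cast_ne_zero.mpr hn
  refine ⟨k, ?_⟩
  have hz : (z : ℚ) = (n : ℚ) * k := by
    field_simp at hk
    linarith
  exact_mod_cast hz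

lemma torsion_eq (n : ℕ) (hn : n ≠ 0) {x : 𝕋} (hx : n • x = 0) :
    ∃ y : ZMod n, zmodEmb n y = x := by
  obtain ⟨q, rfl⟩ := QuotientAddGroup.mk_surjective x
  have h0 : mkQ ((n : ℚ) * q) = 0 := by
    have : (n : ℚ) * q = n • q := by rw [nsmul_eq_mul]
    rw [this, map_nsmul]
    exact hx
  obtain ⟨k, hk⟩ := AddSubgroup.mem_zmultiples_iff.mp ((QuotientAddGroup.eq_zero_iff _).mp h0)
  rw [zsmul_eq_mul, mul_one] at hk
  refine ⟨(k : ZMod n), ?_⟩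
  have hnQ : (n : ℚ) ≠ 0 := Nat.cast_ne_zero.mpr hn
  rw [zmodEmb_intCast]
  congr 1
  rw [zsmul_eq_mul, hk]
  field_simp
  rfl

lemma zmod_hom_ext {A : Type*} [AddCommGroup A] {n : ℕ} {f g : ZMod n →+ A}
    (h : f 1 = g 1) : f = g := by
  ext x
  obtain ⟨z, rfl⟩ := ZMod.intCast_surjective x
  have hz : ((z : ZMod n)) = z • (1 : ZMod n) := by simp
  rw [hz, map_zsmul, map_zsmul, h]

def zmodDualHom (n : ℕ) : ZMod n →+ (ZMod n →+ 𝕋) where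
  toFun k := (zmodEmb n).comp (AddMonoidHom.mulLeft k)
  map_zero' := by ext x; simp
  map_add' a b := by ext x; simp [add_mul]

def zmodDual (n : ℕ) (hn : n ≠ 0) : ZMod n ≃+ (ZMod n →+ 𝕋) := by
  refine AddEquiv.ofBijective (zmodDualHom n) ⟨?_, ?_⟩
  · rw [injective_iff_map_eq_zero]
    intro a ha
    have h1 := DFunLike.congr_fun ha 1
    simp only [zmodDualHom, AddMonoidHom.coe_mk, ZeroHom.coe_mk, AddMonoidHom.coe_comp,
      comp_apply, AddMonoidHom.coe_mulLeft, mul_one, AddMonoidHom.zero_apply] at h1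
    exact zmodEmb_inj n hn (by simpa using h1)
  · intro f
    have hf : n • f 1 = 0 := by
      rw [← map_nsmul]
      have h1 : n • (1 : ZMod n) = 0 := by
        rw [nsmul_eq_mul, mul_one]
        exact_mod_cast ZMod.natCast_self n
      rw [h1, map_zero]
    obtain ⟨y, hy⟩ := torsion_eq n hn hf
    refine ⟨y, zmod_hom_ext ?_⟩
    show zmodEmb n (y * 1) = f 1
    rw [mul_one, hy]

lemma dual_equiv (A : Type*) [AddCommGroup A] [Finite A] :
    Nonempty ((A →+ 𝕋) ≃+ A) := by
  classical
  obtain ⟨ι, hι, n, hn, ⟨e⟩⟩ := AddCommGroup.equiv_directSum_zmod_of_finite' A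
  have h1 : (A →+ 𝕋) ≃+ ((⨁ i, ZMod (n i)) →+ 𝕋) := AddEquiv.addMonoidHomCongrLeft e
  have h2 : ((⨁ i, ZMod (n i)) →+ 𝕋) ≃+ (∀ i, ZMod (n i) →+ 𝕋) := DFinsupp.liftAddHom.symm
  have h3 : (∀ i, ZMod (n i) →+ 𝕋) ≃+ (∀ i, ZMod (n i)) :=
    AddEquiv.piCongrRight fun i => (zmodDual (n i) (by have := hn i; omega)).symm
  have h4 : (∀ i, ZMod (n i)) ≃+ (⨁ i, ZMod (n i)) :=
    (AddEquiv.mk' DFinsupp.equivFunOnFintype fun f g => by ext i; simp).symm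
  exact ⟨h1.trans <| h2.trans <| h3.trans <| h4.trans e.symm⟩

lemma finite_dual (A : Type*) [AddCommGroup A] [Finite A] : Finite (A →+ 𝕋) :=
  Finite.of_equiv A (dual_equiv A).some.toEquiv.symm

lemma card_dual (A : Type*) [AddCommGroup A] [Finite A] :
    Nat.card (A →+ 𝕋) = Nat.card A :=
  Nat.card_congr (dual_equiv A).some.toEquiv

end

end Stmt9Aux
namespace Stmt9Aux
noncomputable section

theorem lemA {I : Type*} (G : I → Type*) [∀ k, AddCommGroup (G k)]
    (C : AddSubgroup (∀ k, G k)) (J : Set I) :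
    Nonempty ((↥C ⧸ (((C ⊓ (restrictHom G (· ∉ J)).ker) ⊔
        (C ⊓ (restrictHom G (· ∈ J)).ker)).addSubgroupOf C)) ≃+
      (↥(C.map (restrictHom G (· ∈ J))) ⧸
        ((C ⊓ (restrictHom G (· ∉ J)).ker).map (restrictHom G (· ∈ J))).addSubgroupOf
          (C.map (restrictHom G (· ∈ J))))) := by
  set r := restrictHom G (· ∈ J) with hr
  set rc := restrictHom G (· ∉ J) with hrc
  have hmem : ∀ c : ↥C, r c.1 ∈ C.map r := fun c => ⟨c.1, c.2, rfl⟩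
  set g : ↥C →+ ↥(C.map r) := (r.comp C.subtype).codRestrict _ hmem with hg
  set f := (QuotientAddGroup.mk' (((C ⊓ rc.ker).map r).addSubgroupOf (C.map r))).comp g with hf
  have hfsurj : Surjective f := by
    intro q
    refine QuotientAddGroup.induction_on q fun d => ?_
    obtain ⟨c, hc, hcd⟩ := d.2
    refine ⟨⟨c, hc⟩, ?_⟩
    rw [hf, AddMonoidHom.comp_apply, QuotientAddGroup.mk'_apply]
    exact congrArg _ (Subtype.ext hcd)
  have hker : f.ker = ((C ⊓ rc.ker) ⊔ (C ⊓ r.ker)).addSubgroupOf C := by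
    ext c
    rw [AddMonoidHom.mem_ker, hf, AddMonoidHom.comp_apply, QuotientAddGroup.mk'_apply,
      QuotientAddGroup.eq_zero_iff, AddSubgroup.mem_addSubgroupOf,
      AddSubgroup.mem_addSubgroupOf]
    constructor
    · rintro ⟨c', hc', hrc'⟩
      -- hrc' : r c' = (g c).1 = r c.1
      refine AddSubgroup.mem_sup.mpr ⟨c', hc', c.1 - c',
        AddSubgroup.mem_inf.mpr ⟨sub_mem c.2 (AddSubgroup.mem_inf.mp hc').1, ?_⟩, by abel⟩
      have h2 : r c' = r c.1 := hrc'
      rw [AddMonoidHom.mem_ker, map_sub, h2, sub_self]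
    · intro h
      obtain ⟨a, ha, b, hb, hab⟩ := AddSubgroup.mem_sup.mp h
      refine ⟨a, ha, ?_⟩
      show r a = r c.1
      have hb0 : r b = 0 := (AddSubgroup.mem_inf.mp hb).2
      rw [← hab, map_add, hb0, add_zero]
  exact ⟨(QuotientAddGroup.quotientAddEquivOfEq hker.symm).trans
    (QuotientAddGroup.quotientKerEquivOfSurjective f hfsurj)⟩

end
end Stmt9Aux
namespace Stmt9Aux
noncomputable section

set_option maxHeartbeats 2000000 in
theorem genPairing {I : Type*} [Fintype I] (G H : I → Type*) [∀ k, AddCommGroup (G k)]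
    [∀ k, AddCommGroup (H k)] (e : ∀ k, H k →+ G k →+ AddCircle (1 : ℚ))
    (C : AddSubgroup (∀ k, G k)) (D : AddSubgroup (∀ k, H k))
    (hsum : ∀ x ∈ D, ∀ c ∈ C, ∑ k, e k (x k) (c k) = 0)
    (hann : ∀ x, (∀ c ∈ C, ∑ k, e k (x k) (c k) = 0) → x ∈ D) (J : Set I) :
    ∃ Φ : (↥D ⧸ (((D ⊓ (restrictHom H (· ∉ J)).ker) ⊔
        (D ⊓ (restrictHom H (· ∈ J)).ker)).addSubgroupOf D)) →+
      ((↥C ⧸ (((C ⊓ (restrictHom G (· ∉ J)).ker) ⊔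
        (C ⊓ (restrictHom G (· ∈ J)).ker)).addSubgroupOf C)) →+ AddCircle (1 : ℚ)),
      Injective Φ := by
  classical
  set NC := ((C ⊓ (restrictHom G (· ∉ J)).ker) ⊔
    (C ⊓ (restrictHom G (· ∈ J)).ker)).addSubgroupOf C with hNCdef
  set ND := ((D ⊓ (restrictHom H (· ∉ J)).ker) ⊔
    (D ⊓ (restrictHom H (· ∈ J)).ker)).addSubgroupOf D with hNDdef
  set B : ↥D →+ ↥C →+ AddCircle (1 : ℚ) :=
    { toFun := fun x =>
      { toFun := fun c => ∑ k, if k ∈ J then e k (x.1 k) (c.1 k) else 0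
        map_zero' := by simp
        map_add' := fun a b => by
          rw [← Finset.sum_add_distrib]
          refine Finset.sum_congr rfl fun k _ => ?_
          by_cases h : k ∈ J <;> simp [h] }
      map_zero' := by ext c; simp
      map_add' := fun a b => by
        ext c
        simp only [AddMonoidHom.coe_mk, ZeroHom.coe_mk, AddMonoidHom.add_apply]
        rw [← Finset.sum_add_distrib]
        refine Finset.sum_congr rfl fun k _ => ?_
        by_cases h : k ∈ J <;> simp [h] } with hBdef
  have hBval : ∀ (x : ↥D) (c : ↥C),
      B x c = ∑ k, if k ∈ J then e k (x.1 k) (c.1 k) else 0 := fun _ _ => rfl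
  have hfull : ∀ (x : ↥D) (c : ↥C), c.1 ∈ (restrictHom G (· ∉ J)).ker → B x c = 0 := by
    intro x c hc
    rw [hBval]
    refine Eq.trans (Finset.sum_congr rfl fun k _ => ?_) (hsum x.1 x.2 c.1 c.2)
    by_cases h : k ∈ J
    · rw [if_pos h]
    · have h0 : c.1 k = 0 := congrFun (AddMonoidHom.mem_ker.mp hc) ⟨k, h⟩
      rw [if_neg h, h0, map_zero]
  have hzeroJ : ∀ (x : ↥D) (c : ↥C), c.1 ∈ (restrictHom G (· ∈ J)).ker → B x c = 0 := by
    intro x c hc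
    rw [hBval]
    refine Finset.sum_eq_zero fun k _ => ?_
    by_cases h : k ∈ J
    · have h0 : c.1 k = 0 := congrFun (AddMonoidHom.mem_ker.mp hc) ⟨k, h⟩
      rw [if_pos h, h0, map_zero]
    · rw [if_neg h]
  have hfullx : ∀ (x : ↥D) (c : ↥C), x.1 ∈ (restrictHom H (· ∉ J)).ker → B x c = 0 := by
    intro x c hx
    rw [hBval]
    refine Eq.trans (Finset.sum_congr rfl fun k _ => ?_) (hsum x.1 x.2 c.1 c.2)
    by_cases h : k ∈ J
    · rw [if_pos h]
    · have h0 : x.1 k = 0 := congrFun (AddMonoidHom.mem_ker.mp hx) ⟨k, h⟩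
      rw [if_neg h, h0, map_zero, AddMonoidHom.zero_apply]
  have hzeroJx : ∀ (x : ↥D) (c : ↥C), x.1 ∈ (restrictHom H (· ∈ J)).ker → B x c = 0 := by
    intro x c hx
    rw [hBval]
    refine Finset.sum_eq_zero fun k _ => ?_
    by_cases h : k ∈ J
    · have h0 : x.1 k = 0 := congrFun (AddMonoidHom.mem_ker.mp hx) ⟨k, h⟩
      rw [if_pos h, h0, map_zero, AddMonoidHom.zero_apply]
    · rw [if_neg h]
  have hNC0 : ∀ x : ↥D, NC ≤ (B x).ker := by
    intro x c hc
    rw [hNCdef, AddSubgroup.mem_addSubgroupOf] at hc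
    obtain ⟨a, ha, b, hb, hab⟩ := AddSubgroup.mem_sup.mp hc
    have hca : (⟨a, (AddSubgroup.mem_inf.mp ha).1⟩ : ↥C) +
        ⟨b, (AddSubgroup.mem_inf.mp hb).1⟩ = c := Subtype.ext hab
    rw [AddMonoidHom.mem_ker, ← hca, map_add,
      hfull x _ (AddSubgroup.mem_inf.mp ha).2, hzeroJ x _ (AddSubgroup.mem_inf.mp hb).2,
      add_zero]
  have hlift : ∀ (x : ↥D) (c : ↥C),
      QuotientAddGroup.lift NC (B x) (hNC0 x) ((QuotientAddGroup.mk c : ↥C ⧸ NC)) = B x c :=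
    fun x c => QuotientAddGroup.lift_mk NC (hNC0 x) c
  set L : ↥D →+ ((↥C ⧸ NC) →+ AddCircle (1 : ℚ)) :=
    { toFun := fun x => QuotientAddGroup.lift NC (B x) (hNC0 x)
      map_zero' := by
        refine AddMonoidHom.ext fun q => ?_
        refine QuotientAddGroup.induction_on q fun c => ?_
        rw [hlift 0 c, map_zero, AddMonoidHom.zero_apply, AddMonoidHom.zero_apply]
      map_add' := fun a b => by
        refine AddMonoidHom.ext fun q => ?_
        refine QuotientAddGroup.induction_on q fun c => ?_
        rw [AddMonoidHom.add_apply, hlift (a + b) c, hlift a c, hlift b c, map_add,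
          AddMonoidHom.add_apply] } with hLdef
  have hLapp : ∀ (x : ↥D) (c : ↥C), L x ((QuotientAddGroup.mk c : ↥C ⧸ NC)) = B x c := by
    intro x c
    rw [hLdef]
    exact hlift x c
  have hND0 : ND ≤ L.ker := by
    intro x hx
    rw [hNDdef, AddSubgroup.mem_addSubgroupOf] at hx
    obtain ⟨a, ha, b, hb, hab⟩ := AddSubgroup.mem_sup.mp hx
    have hxa : (⟨a, (AddSubgroup.mem_inf.mp ha).1⟩ : ↥D) +
        ⟨b, (AddSubgroup.mem_inf.mp hb).1⟩ = x := Subtype.ext hab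
    rw [AddMonoidHom.mem_ker]
    refine AddMonoidHom.ext fun q => ?_
    refine QuotientAddGroup.induction_on q fun c => ?_
    rw [AddMonoidHom.zero_apply, hLapp x c, ← hxa, map_add, AddMonoidHom.add_apply,
      hfullx _ c (AddSubgroup.mem_inf.mp ha).2, hzeroJx _ c (AddSubgroup.mem_inf.mp hb).2,
      add_zero]
  refine ⟨QuotientAddGroup.lift ND L hND0, ?_⟩
  rw [injective_iff_map_eq_zero]
  intro q
  refine QuotientAddGroup.induction_on q fun x hq => ?_
  rw [QuotientAddGroup.lift_mk] at hq
  have hBx : ∀ c : ↥C, B x c = 0 := by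
    intro c
    have h1 := DFunLike.congr_fun hq (QuotientAddGroup.mk c)
    rwa [hLapp x c, AddMonoidHom.zero_apply] at h1
  obtain ⟨x', hx'def⟩ : ∃ x' : ∀ k, H k, x' = fun k => if k ∈ J then x.1 k else 0 := ⟨_, rfl⟩
  have hx'D : x' ∈ D := by
    refine hann x' fun c hc => ?_
    have h2 : ∑ k, e k (x' k) (c k) = B x ⟨c, hc⟩ := by
      rw [hBval]
      refine Finset.sum_congr rfl fun k _ => ?_
      by_cases h : k ∈ J
      · simp only [hx'def, if_pos h]
      · simp only [hx'def, if_neg h, map_zero, AddMonoidHom.zero_apply]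
    rw [h2, hBx]
  have hx'k : x' ∈ (restrictHom H (· ∉ J)).ker := by
    rw [AddMonoidHom.mem_ker]
    funext k
    show x' k.1 = 0
    simp only [hx'def]
    exact if_neg k.2
  have hx2 : x.1 - x' ∈ (restrictHom H (· ∈ J)).ker := by
    rw [AddMonoidHom.mem_ker]
    funext k
    show x.1 k.1 - x' k.1 = 0
    simp only [hx'def, if_pos k.2, sub_self]
  rw [QuotientAddGroup.eq_zero_iff, AddSubgroup.mem_addSubgroupOf]
  exact AddSubgroup.mem_sup.mpr ⟨x', AddSubgroup.mem_inf.mpr ⟨hx'D, hx'k⟩, x.1 - x',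
    AddSubgroup.mem_inf.mpr ⟨sub_mem x.2 hx'D, hx2⟩, by abel⟩

end
end Stmt9Aux
namespace Stmt9Aux
noncomputable section

lemma double_ann {I : Type*} [Fintype I] (G : I → Type*) [∀ k, AddCommGroup (G k)]
    (C : AddSubgroup (∀ k, G k)) (Cp : AddSubgroup (∀ k, G k →+ AddCircle (1 : ℚ)))
    (hCp : ∀ x, x ∈ Cp ↔ ∀ c ∈ C, ∑ k, x k (c k) = 0) :
    ∀ w, (∀ x ∈ Cp, ∑ k, x k (w k) = 0) → w ∈ C := by
  classical
  intro w hw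
  by_contra hwC
  have hne : (QuotientAddGroup.mk w : (∀ k, G k) ⧸ C) ≠ 0 := by
    rw [ne_eq, QuotientAddGroup.eq_zero_iff]
    exact hwC
  obtain ⟨χ₀, hχ⟩ := CharacterModule.exists_character_apply_ne_zero_of_ne_zero hne
  set χ : ((∀ k, G k) ⧸ C) →+ AddCircle (1 : ℚ) := χ₀ with hχdef
  set χ' : (∀ k, G k) →+ AddCircle (1 : ℚ) := χ.comp (QuotientAddGroup.mk' C) with hχ'def
  set x : ∀ k, G k →+ AddCircle (1 : ℚ) := fun k => χ'.comp (AddMonoidHom.single G k) with hxdef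
  have key : ∀ w' : ∀ k, G k, ∑ k, x k (w' k) = χ' w' := by
    intro w'
    have h1 : ∀ k, x k (w' k) = χ' (Pi.single k (w' k)) := fun k => rfl
    calc ∑ k, x k (w' k) = ∑ k, χ' (Pi.single k (w' k)) := Finset.sum_congr rfl fun k _ => h1 k
      _ = χ' (∑ k, Pi.single k (w' k)) := (map_sum χ' _ _).symm
      _ = χ' w' := by rw [Finset.univ_sum_single]
  have hx : x ∈ Cp := by
    rw [hCp]
    intro c hc
    rw [key, hχ'def, AddMonoidHom.comp_apply, QuotientAddGroup.mk'_apply,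
      (QuotientAddGroup.eq_zero_iff c).mpr hc, map_zero]
  have h2 := hw x hx
  rw [key, hχ'def, AddMonoidHom.comp_apply, QuotientAddGroup.mk'_apply] at h2
  exact hχ h2

end
end Stmt9Aux
open Stmt9Aux in
/-- Dual state space theorem (finite case): if `C` and `Cp = C^⊥` are dual subgroups of
`∏ₖ G k` and `∏ₖ Ĝ k` under the pairing `⟨x, w⟩ = Σₖ x k (w k)`, then the one-sided state
space `(C^⊥)_{|J}/(C^⊥)_{|:J}` is isomorphic to the character group of the one-sided state
space `C_{|J}/C_{|:J}`; in particular the two-sided state spaces satisfy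
`Σ_J(C) ≅ Σ_J(C^⊥)`. -/
theorem stmt9 {I : Type*} [Fintype I] (G : I → Type*) [∀ k, AddCommGroup (G k)]
    [∀ k, Fintype (G k)] (C : AddSubgroup (∀ k, G k))
    (Cp : AddSubgroup (∀ k, G k →+ AddCircle (1 : ℚ)))
    (hCp : (Cp : Set (∀ k, G k →+ AddCircle (1 : ℚ))) =
      {x | ∀ c ∈ C, ∑ k, x k (c k) = 0})
    (J : Set I) :
    Nonempty
      ((↥(Cp.map (restrictHom (fun k => G k →+ AddCircle (1 : ℚ)) (· ∈ J))) ⧸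
          ((Cp ⊓ (restrictHom (fun k => G k →+ AddCircle (1 : ℚ)) (· ∉ J)).ker).map
              (restrictHom (fun k => G k →+ AddCircle (1 : ℚ)) (· ∈ J))).addSubgroupOf
            (Cp.map (restrictHom (fun k => G k →+ AddCircle (1 : ℚ)) (· ∈ J)))) ≃+
        ((↥(C.map (restrictHom G (· ∈ J))) ⧸
            ((C ⊓ (restrictHom G (· ∉ J)).ker).map (restrictHom G (· ∈ J))).addSubgroupOf
              (C.map (restrictHom G (· ∈ J)))) →+ AddCircle (1 : ℚ))) ∧
    Nonempty
      ((↥C ⧸ (((C ⊓ (restrictHom G (· ∉ J)).ker) ⊔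
            (C ⊓ (restrictHom G (· ∈ J)).ker)).addSubgroupOf C)) ≃+
        (↥Cp ⧸ (((Cp ⊓ (restrictHom (fun k => G k →+ AddCircle (1 : ℚ)) (· ∉ J)).ker) ⊔
            (Cp ⊓ (restrictHom (fun k => G k →+ AddCircle (1 : ℚ)) (· ∈ J)).ker)).addSubgroupOf Cp))) := by
  classical
  have hCp' : ∀ x, x ∈ Cp ↔ ∀ c ∈ C, ∑ k, x k (c k) = 0 := by
    intro x
    constructor
    · intro hx
      have h1 : x ∈ (Cp : Set _) := hx
      rw [hCp] at h1
      exact h1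
    · intro hx
      have h1 : x ∈ (Cp : Set _) := by rw [hCp]; exact hx
      exact h1
  have hC' : ∀ w, (∀ x ∈ Cp, ∑ k, x k (w k) = 0) → w ∈ C := double_ann G C Cp hCp'
  haveI hfin : ∀ k, Finite (G k →+ AddCircle (1 : ℚ)) := fun k => finite_dual (G k)
  -- first pairing : Cp-side into dual of C-side
  obtain ⟨Φ, hΦ⟩ := genPairing G (fun k => G k →+ AddCircle (1 : ℚ))
    (fun k => AddMonoidHom.id (G k →+ AddCircle (1 : ℚ))) C Cp
    (fun x hx c hc => by simpa using (hCp' x).mp hx c hc)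
    (fun x hx => (hCp' x).mpr fun c hc => by simpa using hx c hc) J
  -- second pairing : C-side into dual of Cp-side
  obtain ⟨Ψ, hΨ⟩ := genPairing (fun k => G k →+ AddCircle (1 : ℚ)) G
    (fun k => (AddMonoidHom.id (G k →+ AddCircle (1 : ℚ))).flip) Cp C
    (fun c hc x hx => by simpa using (hCp' x).mp hx c hc)
    (fun c hc => hC' c fun x hx => by simpa using hc x hx) J
  haveI f1 : Finite ((↥C ⧸ (((C ⊓ (restrictHom G (· ∉ J)).ker) ⊔
      (C ⊓ (restrictHom G (· ∈ J)).ker)).addSubgroupOf C)) →+ AddCircle (1 : ℚ)) :=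
    finite_dual (↥C ⧸ (((C ⊓ (restrictHom G (· ∉ J)).ker) ⊔
      (C ⊓ (restrictHom G (· ∈ J)).ker)).addSubgroupOf C))
  haveI f2 : Finite ((↥Cp ⧸ (((Cp ⊓ (restrictHom (fun k => G k →+ AddCircle (1 : ℚ)) (· ∉ J)).ker) ⊔
      (Cp ⊓ (restrictHom (fun k => G k →+ AddCircle (1 : ℚ)) (· ∈ J)).ker)).addSubgroupOf Cp)) →+
      AddCircle (1 : ℚ)) :=
    finite_dual (↥Cp ⧸ (((Cp ⊓ (restrictHom (fun k => G k →+ AddCircle (1 : ℚ)) (· ∉ J)).ker) ⊔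
      (Cp ⊓ (restrictHom (fun k => G k →+ AddCircle (1 : ℚ)) (· ∈ J)).ker)).addSubgroupOf Cp))
  have c1 := Nat.card_le_card_of_injective Φ hΦ
  have c2 := Nat.card_le_card_of_injective Ψ hΨ
  have d1 := card_dual (↥C ⧸ (((C ⊓ (restrictHom G (· ∉ J)).ker) ⊔
    (C ⊓ (restrictHom G (· ∈ J)).ker)).addSubgroupOf C))
  have d2 := card_dual (↥Cp ⧸ (((Cp ⊓ (restrictHom (fun k => G k →+ AddCircle (1 : ℚ)) (· ∉ J)).ker) ⊔
    (Cp ⊓ (restrictHom (fun k => G k →+ AddCircle (1 : ℚ)) (· ∈ J)).ker)).addSubgroupOf Cp))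
  have hbij : Function.Bijective Φ :=
    (Nat.bijective_iff_injective_and_card Φ).mpr ⟨hΦ, by omega⟩
  have E2 := AddEquiv.ofBijective Φ hbij
  constructor
  · exact ⟨((lemA (fun k => G k →+ AddCircle (1 : ℚ)) Cp J).some.symm.trans E2).trans
      (AddEquiv.addMonoidHomCongrLeft (lemA G C J).some)⟩
  · exact ⟨(E2.trans (dual_equiv _).some).symm⟩
end

section
/- Let C ≤ W = ∏_{k∈I} G_k (I finite, groups finite abelian), J ⊆ I, and define the reciprocal state space Σ^J(C) = (C_{|J} × C_{|I∖J}) / C, where C_{|J} × C_{|I∖J} is the subgroup of W consisting of all sequences whose restriction to J lies in C_{|J} and whose restriction to I∖J lies in C_{|I∖J}. Then Σ^J(C) is isomorphic to the state space Σ_J(C) = C / (C_{:J} × C_{:I∖J}). -/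
/-- Auxiliary subgroup of triples `(w, c, d)` with `c, d ∈ C`, `c|J = w|J`, `d|J' = w|J'`. -/
def Qsub {I : Type*} (G : I → Type*) [∀ k, AddCommGroup (G k)] (C : AddSubgroup (∀ k, G k))
    (J : Set I) : AddSubgroup ((∀ k, G k) × (∀ k, G k) × (∀ k, G k)) where
  carrier := {x | x.2.1 ∈ C ∧ x.2.2 ∈ C ∧
    restrictHom G (· ∈ J) x.2.1 = restrictHom G (· ∈ J) x.1 ∧
    restrictHom G (· ∉ J) x.2.2 = restrictHom G (· ∉ J) x.1}
  zero_mem' := ⟨C.zero_mem, C.zero_mem, rfl, rfl⟩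
  add_mem' := by
    rintro a b ⟨h1, h2, h3, h4⟩ ⟨h1', h2', h3', h4'⟩
    exact ⟨C.add_mem h1 h1', C.add_mem h2 h2',
      by simp only [Prod.snd_add, Prod.fst_add, map_add, h3, h3'],
      by simp only [Prod.snd_add, Prod.fst_add, map_add, h4, h4']⟩
  neg_mem' := by
    rintro a ⟨h1, h2, h3, h4⟩
    exact ⟨C.neg_mem h1, C.neg_mem h2,
      by simp only [Prod.snd_neg, Prod.fst_neg, map_neg, h3, h4],
      by simp only [Prod.snd_neg, Prod.fst_neg, map_neg, h3, h4]⟩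

/-- Reciprocal state space corollary (finite abelian case): with
`P = C_{|J} × C_{|I∖J} = {w : w|J ∈ C|J and w|I∖J ∈ C|I∖J}`, the reciprocal state space
`Σ^J(C) = P / C` is isomorphic to the state space `Σ_J(C) = C / (C_{:J} + C_{:I∖J})`. -/
theorem stmt10 {I : Type*} [Fintype I] (G : I → Type*) [∀ k, AddCommGroup (G k)]
    [∀ k, Fintype (G k)] (C : AddSubgroup (∀ k, G k)) (J : Set I) :
    ∀ P : AddSubgroup (∀ k, G k),
      P = (C.map (restrictHom G (· ∈ J))).comap (restrictHom G (· ∈ J)) ⊓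
          (C.map (restrictHom G (· ∉ J))).comap (restrictHom G (· ∉ J)) →
      Nonempty ((↥P ⧸ C.addSubgroupOf P) ≃+
        (↥C ⧸ (((C ⊓ (restrictHom G (· ∉ J)).ker) ⊔
            (C ⊓ (restrictHom G (· ∈ J)).ker)).addSubgroupOf C))) := by
  intro P hP
  classical
  set D : AddSubgroup (∀ k, G k) :=
    (C ⊓ (restrictHom G (· ∉ J)).ker) ⊔ (C ⊓ (restrictHom G (· ∈ J)).ker) with hD
  -- every first coordinate of Qsub lies in P
  have hPmem : ∀ x ∈ Qsub G C J, x.1 ∈ P := by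
    rintro x ⟨h1, h2, h3, h4⟩
    rw [hP]
    exact ⟨⟨x.2.1, h1, h3⟩, ⟨x.2.2, h2, h4⟩⟩
  let toP : (Qsub G C J) →+ P :=
    { toFun := fun x => ⟨x.1.1, hPmem x.1 x.2⟩
      map_zero' := rfl
      map_add' := fun _ _ => rfl }
  let toC : (Qsub G C J) →+ C :=
    { toFun := fun x => ⟨x.1.2.1 - x.1.2.2, C.sub_mem x.2.1 x.2.2.1⟩
      map_zero' := by ext; simp
      map_add' := fun a b => by
        ext k
        show (a.1.2.1 + b.1.2.1 - (a.1.2.2 + b.1.2.2)) k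
          = ((a.1.2.1 - a.1.2.2) + (b.1.2.1 - b.1.2.2)) k
        simp only [Pi.add_apply, Pi.sub_apply]
        abel }
  let f : (Qsub G C J) →+ (↥P ⧸ C.addSubgroupOf P) :=
    (QuotientAddGroup.mk' (C.addSubgroupOf P)).comp toP
  let g : (Qsub G C J) →+ (↥C ⧸ D.addSubgroupOf C) :=
    (QuotientAddGroup.mk' (D.addSubgroupOf C)).comp toC
  -- surjectivity of f
  have hf : Function.Surjective f := by
    intro q
    obtain ⟨p, rfl⟩ := QuotientAddGroup.mk'_surjective (C.addSubgroupOf P) q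
    have hp : (p : ∀ k, G k) ∈
        (C.map (restrictHom G (· ∈ J))).comap (restrictHom G (· ∈ J)) ⊓
          (C.map (restrictHom G (· ∉ J))).comap (restrictHom G (· ∉ J)) := by
      rw [← hP]; exact p.2
    obtain ⟨⟨c, hc, hcJ⟩, ⟨d, hd, hdJ⟩⟩ := hp
    refine ⟨⟨(p.1, c, d), hc, hd, hcJ, hdJ⟩, ?_⟩
    show QuotientAddGroup.mk' _ _ = QuotientAddGroup.mk' _ p
    congr 1
  -- surjectivity of g
  have hg : Function.Surjective g := by
    intro q
    obtain ⟨c, rfl⟩ := QuotientAddGroup.mk'_surjective (D.addSubgroupOf C) q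
    set w : ∀ k, G k := fun k => if k ∈ J then c.1 k else 0 with hw
    have h3 : restrictHom G (· ∈ J) c.1 = restrictHom G (· ∈ J) w := by
      funext k
      show c.1 k.1 = w k.1
      simp [hw, k.2]
    have h4 : restrictHom G (· ∉ J) (0 : ∀ k, G k) = restrictHom G (· ∉ J) w := by
      funext k
      show (0 : G k.1) = w k.1
      simp [hw, k.2]
    refine ⟨⟨(w, c.1, 0), c.2, C.zero_mem, h3, h4⟩, ?_⟩
    show QuotientAddGroup.mk' _ _ = QuotientAddGroup.mk' _ c
    congr 1
    ext k
    show (c.1 - 0) k = c.1 k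
    simp
  -- kernel equality
  have hker : f.ker = g.ker := by
    ext x
    obtain ⟨h1, h2, h3, h4⟩ := x.2
    have hfx : x ∈ f.ker ↔ x.1.1 ∈ C := by
      rw [AddMonoidHom.mem_ker,
        show f x = QuotientAddGroup.mk (toP x) from rfl,
        QuotientAddGroup.eq_zero_iff, AddSubgroup.mem_addSubgroupOf]
      exact Iff.rfl
    have hgx : x ∈ g.ker ↔ x.1.2.1 - x.1.2.2 ∈ D := by
      rw [AddMonoidHom.mem_ker,
        show g x = QuotientAddGroup.mk (toC x) from rfl,
        QuotientAddGroup.eq_zero_iff, AddSubgroup.mem_addSubgroupOf]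
      exact Iff.rfl
    rw [hfx, hgx]
    constructor
    · intro hw
      have hy : x.1.1 - x.1.2.2 ∈ C ⊓ (restrictHom G (· ∉ J)).ker :=
        ⟨C.sub_mem hw h2, AddMonoidHom.mem_ker.mpr (by rw [map_sub, ← h4, sub_self])⟩
      have hz : x.1.2.1 - x.1.1 ∈ C ⊓ (restrictHom G (· ∈ J)).ker :=
        ⟨C.sub_mem h1 hw, AddMonoidHom.mem_ker.mpr (by rw [map_sub, h3, sub_self])⟩
      exact AddSubgroup.mem_sup.mpr ⟨_, hy, _, hz, by abel⟩
    · intro hcd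
      obtain ⟨a, ⟨haC, haK⟩, b, ⟨hbC, hbK⟩, hab⟩ := AddSubgroup.mem_sup.mp hcd
      have haK' := AddMonoidHom.mem_ker.mp haK
      have hbK' := AddMonoidHom.mem_ker.mp hbK
      have hwe : x.1.1 = x.1.2.1 - b := by
        funext k
        show x.1.1 k = x.1.2.1 k - b k
        by_cases hk : k ∈ J
        · have e1 : x.1.2.1 k = x.1.1 k := congrFun h3 ⟨k, hk⟩
          have e2 : b k = 0 := congrFun hbK' ⟨k, hk⟩
          rw [e2, sub_zero, e1]
        · have e1 : x.1.2.2 k = x.1.1 k := congrFun h4 ⟨k, hk⟩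
          have e2 : a k = 0 := congrFun haK' ⟨k, hk⟩
          have e3 : a k + b k = x.1.2.1 k - x.1.2.2 k := congrFun hab k
          rw [e2, zero_add] at e3
          rw [e3, ← e1]
          abel
      rw [hwe]
      exact C.sub_mem h1 hbC
  exact ⟨((QuotientAddGroup.quotientKerEquivOfSurjective f hf).symm.trans
    (QuotientAddGroup.quotientAddEquivOfEq hker)).trans
    (QuotientAddGroup.quotientKerEquivOfSurjective g hg)⟩
end

section
/- Let C be a subgroup of a direct product W = ∏_{k∈I} G_k of groups (possibly nonabelian), J ⊆ I, and suppose C is a normal subgroup of C_{|J} × C_{|I∖J} (the subgroup of W of elements whose restrictions to J and I∖J each lie in the corresponding restriction of C). Then the state space Σ_J(C) = C / (C_{:J} · C_{:I∖J}) is abelian. -/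
/-- The restriction homomorphism from a product of (possibly nonabelian) groups to the
product over the coordinates satisfying a predicate `p`. -/
def restrictMonoidHom {I : Type*} (G : I → Type*) [∀ k, Group (G k)] (p : I → Prop) :
    (∀ k, G k) →* (∀ k : Subtype p, G k.1) where
  toFun w k := w k.1
  map_one' := rfl
  map_mul' _ _ := rfl

/-- Algebraic reciprocal state space theorem, one direction: if a subgroup `C` of a product
`∏ₖ G k` of possibly nonabelian groups is normal in `C_{|J} × C_{|I∖J}`, then the state
space `Σ_J(C) = C / (C_{:J} · C_{:I∖J})` is abelian, i.e. all commutators of elements of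
`C` lie in the internal product `C_{:J} · C_{:I∖J}`. -/
theorem stmt11 {I : Type*} (G : I → Type*) [∀ k, Group (G k)]
    (C : Subgroup (∀ k, G k)) (J : Set I)
    (hnorm : ∀ w ∈ ((C.map (restrictMonoidHom G (· ∈ J))).comap (restrictMonoidHom G (· ∈ J)) ⊓
        (C.map (restrictMonoidHom G (· ∉ J))).comap (restrictMonoidHom G (· ∉ J))),
      ∀ c ∈ C, w * c * w⁻¹ ∈ C) :
    ∀ x ∈ C, ∀ y ∈ C, x * y * x⁻¹ * y⁻¹ ∈
      ((C ⊓ (restrictMonoidHom G (· ∉ J)).ker) ⊔ (C ⊓ (restrictMonoidHom G (· ∈ J)).ker)) := by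
  classical
  intro x hx y hy
  -- projections of x onto J and its complement
  set a : ∀ k, G k := fun k => if k ∈ J then x k else 1 with ha_def
  set b : ∀ k, G k := fun k => if k ∈ J then 1 else x k with hb_def
  have hab : a * b = x := by
    funext k
    by_cases h : k ∈ J <;> simp [ha_def, hb_def, h]
  -- a is in the big group
  have haG : a ∈ ((C.map (restrictMonoidHom G (· ∈ J))).comap (restrictMonoidHom G (· ∈ J)) ⊓
      (C.map (restrictMonoidHom G (· ∉ J))).comap (restrictMonoidHom G (· ∉ J))) := by
    constructor
    · refine ⟨x, hx, ?_⟩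
      funext k
      simp [restrictMonoidHom, ha_def, k.2]
    · refine ⟨1, C.one_mem, ?_⟩
      funext k
      simp [restrictMonoidHom, ha_def, k.2]
  have hbG : b ∈ ((C.map (restrictMonoidHom G (· ∈ J))).comap (restrictMonoidHom G (· ∈ J)) ⊓
      (C.map (restrictMonoidHom G (· ∉ J))).comap (restrictMonoidHom G (· ∉ J))) := by
    constructor
    · refine ⟨1, C.one_mem, ?_⟩
      funext k
      simp [restrictMonoidHom, hb_def, k.2]
    · refine ⟨x, hx, ?_⟩
      funext k
      simp [restrictMonoidHom, hb_def, k.2]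
  -- u = [b, y] lies in C and in ker(restrict to J)
  set u : ∀ k, G k := b * y * b⁻¹ * y⁻¹ with hu_def
  have huC : u ∈ C := C.mul_mem (hnorm b hbG y hy) (C.inv_mem hy)
  have hukerJ : ∀ k ∈ J, u k = 1 := by
    intro k hk
    simp [hu_def, hb_def, hk, Pi.mul_apply, Pi.inv_apply]
  -- v = a * u * a⁻¹ lies in C and in ker(restrict to J)
  set v : ∀ k, G k := a * u * a⁻¹ with hv_def
  have hvC : v ∈ C := hnorm a haG u huC
  have hv : v ∈ C ⊓ (restrictMonoidHom G (· ∈ J)).ker := by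
    refine ⟨hvC, ?_⟩
    show restrictMonoidHom G (· ∈ J) v = 1
    funext k
    have := hukerJ k.1 k.2
    simp [restrictMonoidHom, hv_def, Pi.mul_apply, Pi.inv_apply, this]
  -- w = [a, y] lies in C and in ker(restrict to complement of J)
  set w : ∀ k, G k := a * y * a⁻¹ * y⁻¹ with hw_def
  have hwC : w ∈ C := C.mul_mem (hnorm a haG y hy) (C.inv_mem hy)
  have hw : w ∈ C ⊓ (restrictMonoidHom G (· ∉ J)).ker := by
    refine ⟨hwC, ?_⟩
    show restrictMonoidHom G (· ∉ J) w = 1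
    funext k
    have hk : ¬ k.1 ∈ J := k.2
    simp [restrictMonoidHom, hw_def, ha_def, hk, Pi.mul_apply, Pi.inv_apply]
  -- the commutator equals v * w
  have key : x * y * x⁻¹ * y⁻¹ = v * w := by
    rw [hv_def, hw_def, hu_def, ← hab]
    group
  rw [key]
  exact mul_mem (le_sup_right (a := C ⊓ (restrictMonoidHom G (· ∉ J)).ker) hv)
    (le_sup_left (b := C ⊓ (restrictMonoidHom G (· ∈ J)).ker) hw)
end

section
/- Let C be a subgroup of W = ∏_{k∈I} G_k with I finite, and suppose the state space Σ_J(C) = C/(C_{:J}·C_{:I∖J}) is abelian. Define the state-difference map d on C_{|J} × C_{|I∖J} by d(w_J, w_{I∖J}) = σ_J(w_J) − σ_{I∖J}(w_{I∖J}), where σ_J : C_{|J} → Σ_J(C) and σ_{I∖J} : C_{|I∖J} → Σ_J(C) are the state maps induced by the one-sided state space isomorphisms. Then a pair (w_J, w_{I∖J}) ∈ C_{|J} × C_{|I∖J} lies in C if and only if d(w_J, w_{I∖J}) = 0; consequently C is a normal subgroup of C_{|J} × C_{|I∖J}. -/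
/-- State-difference membership criterion (abelian case, where the state space
`Σ_J(C) = C/(C_{:J} + C_{:I∖J})` is automatically abelian): a pair
`(w_J, w_{I∖J}) ∈ C_{|J} × C_{|I∖J}`, realized by a sequence `w` whose restriction to `J`
agrees with some `c ∈ C` and whose restriction to `I∖J` agrees with some `c' ∈ C`, lies in
`C` if and only if the state difference `d = σ_J(w_J) − σ_{I∖J}(w_{I∖J})` vanishes, i.e.
iff `c − c' ∈ C_{:J} + C_{:I∖J}`; consequently `C` is a normal subgroup of
`C_{|J} × C_{|I∖J}`. -/
theorem stmt12 {I : Type*} (G : I → Type*) [∀ k, AddCommGroup (G k)]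
    (C : AddSubgroup (∀ k, G k)) (J : Set I) :
    (∀ w c c' : ∀ k, G k, c ∈ C → c' ∈ C →
      restrictHom G (· ∈ J) c = restrictHom G (· ∈ J) w →
      restrictHom G (· ∉ J) c' = restrictHom G (· ∉ J) w →
      (w ∈ C ↔ c - c' ∈
        ((C ⊓ (restrictHom G (· ∉ J)).ker) ⊔ (C ⊓ (restrictHom G (· ∈ J)).ker)))) ∧
    ∀ P : AddSubgroup (∀ k, G k),
      P = (C.map (restrictHom G (· ∈ J))).comap (restrictHom G (· ∈ J)) ⊓
          (C.map (restrictHom G (· ∉ J))).comap (restrictHom G (· ∉ J)) →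
      (C.addSubgroupOf P).Normal := by
  constructor
  · intro w c c' hc hc' hcw hc'w
    have hJ : ∀ k, k ∈ J → c k = w k := fun k hk => congrFun hcw ⟨k, hk⟩
    have hJc : ∀ k, k ∉ J → c' k = w k := fun k hk => congrFun hc'w ⟨k, hk⟩
    constructor
    · intro hw
      rw [AddSubgroup.mem_sup]
      refine ⟨w - c', ⟨C.sub_mem hw hc', ?_⟩, c - w, ⟨C.sub_mem hc hw, ?_⟩, by abel⟩
      · funext k; simp [restrictHom, hJc k.1 k.2]
      · funext k; simp [restrictHom, hJ k.1 k.2]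
    · intro h
      rw [AddSubgroup.mem_sup] at h
      obtain ⟨a, ⟨haC, haK⟩, b, ⟨hbC, hbK⟩, hab⟩ := h
      have haz : ∀ k, k ∉ J → a k = 0 := fun k hk => congrFun haK ⟨k, hk⟩
      have hbz : ∀ k, k ∈ J → b k = 0 := fun k hk => congrFun hbK ⟨k, hk⟩
      have : w = c - b := by
        funext k
        by_cases hk : k ∈ J
        · simp [hbz k hk, hJ k hk]
        · have := congrFun hab k
          simp only [Pi.add_apply, Pi.sub_apply] at this
          rw [haz k hk, zero_add] at this
          rw [Pi.sub_apply, this, ← hJc k hk]; abel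
      rw [this]
      exact C.sub_mem hc hbC
  · intro P _
    exact ⟨fun n hn g => by simpa [add_comm, add_assoc, add_left_comm] using hn⟩
end

section
/- Let C be a subgroup of the direct sum W_f = ⨁_{k∈ℤ} G_k of abelian groups (every codeword has finite support). If C is L-finite, i.e., C is generated by its subcodes C_{:[k,k+L]} = {c ∈ C : supp(c) ⊆ [k, k+L]} for k ∈ ℤ, then C is L-controllable: for every m and every c, c' ∈ C there exists c'' ∈ C with c''_k = c_k for all k < m and c''_k = c'_k for all k ≥ m + L. -/
/-- L-finiteness implies L-controllability for group codes in the direct sum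
`W_f = ⨁_{k∈ℤ} G k`: if `C` is generated by its subcodes supported on intervals
`[k, k+L]`, then any past of a codeword can be linked to any future of another codeword
within `L` time units. -/
theorem stmt14 (G : ℤ → Type*) [∀ k, AddCommGroup (G k)]
    (C : AddSubgroup (Π₀ k, G k)) (L : ℕ)
    (hLfin : C = AddSubgroup.closure (⋃ k : ℤ,
      {c : Π₀ i, G i | c ∈ C ∧ ∀ j : ℤ, c j ≠ 0 → k ≤ j ∧ j ≤ k + (L : ℤ)})) :
    ∀ m : ℤ, ∀ c ∈ C, ∀ c' ∈ C, ∃ c'' ∈ C,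
      (∀ k : ℤ, k < m → c'' k = c k) ∧ ∀ k : ℤ, m + (L : ℤ) ≤ k → c'' k = c' k := by
  intro m c hc c' hc'
  have key : ∀ x ∈ C, ∃ a ∈ C, ∃ b ∈ C, x = a + b ∧
      (∀ j : ℤ, m + (L : ℤ) ≤ j → a j = 0) ∧ (∀ j : ℤ, j < m → b j = 0) := by
    intro x hx
    rw [hLfin] at hx
    induction hx using AddSubgroup.closure_induction with
    | mem g hg =>
      simp only [Set.mem_iUnion, Set.mem_setOf_eq] at hg
      obtain ⟨k, hgC, hsupp⟩ := hg
      by_cases h : m ≤ k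
      · refine ⟨0, zero_mem _, g, hgC, by simp, by simp, ?_⟩
        intro j hj
        by_contra hne
        exact absurd (le_trans h (hsupp j hne).1) (not_le.mpr hj)
      · refine ⟨g, hgC, 0, zero_mem _, by simp, ?_, by simp⟩
        intro j hj
        by_contra hne
        have := (hsupp j hne).2
        omega
    | zero =>
      exact ⟨0, zero_mem _, 0, zero_mem _, by simp, by simp, by simp⟩
    | add x y _ _ ihx ihy =>
      obtain ⟨a, ha, b, hb, hxe, ha0, hb0⟩ := ihx
      obtain ⟨a', ha', b', hb', hye, ha0', hb0'⟩ := ihy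
      refine ⟨a + a', add_mem ha ha', b + b', add_mem hb hb', by rw [hxe, hye]; abel,
        fun j hj => ?_, fun j hj => ?_⟩
      · simp [ha0 j hj, ha0' j hj]
      · simp [hb0 j hj, hb0' j hj]
    | neg x _ ihx =>
      obtain ⟨a, ha, b, hb, hxe, ha0, hb0⟩ := ihx
      refine ⟨-a, neg_mem ha, -b, neg_mem hb, by rw [hxe]; abel,
        fun j hj => ?_, fun j hj => ?_⟩
      · simp [ha0 j hj]
      · simp [hb0 j hj]
  obtain ⟨a, ha, b, hb, hce, ha0, hb0⟩ := key c hc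
  obtain ⟨a', ha', b', hb', hce', ha0', hb0'⟩ := key c' hc'
  refine ⟨a + b', add_mem ha hb', ?_, ?_⟩
  · intro k hk
    have : c k = a k + b k := by rw [hce]; simp
    simp [this, hb0 k hk, hb0' k hk]
  · intro k hk
    have : c' k = a' k + b' k := by rw [hce']; simp
    simp [this, ha0 k hk, ha0' k hk, DFinsupp.add_apply]
end

section
/- Let C be a subgroup of W_f = ⨁_{k∈ℤ} G_k (abelian groups, finite support). If C is L-controllable (for every m, C = C_{:(m+L)^-} + C_{:m^+}, where C_{:(m+L)^-} is the subcode supported on times < m+L and C_{:m^+} the subcode supported on times ≥ m), then C is L-finite: every c ∈ C is a finite sum of codewords each supported in some interval of length L+1. -/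
private lemma aux15 (G : ℤ → Type*) [∀ k, AddCommGroup (G k)]
    (C : AddSubgroup (Π₀ k, G k)) (L : ℕ)
    (hctrl : ∀ m : ℤ, ∀ c ∈ C, ∃ a b : Π₀ k, G k, a ∈ C ∧ b ∈ C ∧
      (∀ k : ℤ, a k ≠ 0 → k < m + (L : ℤ)) ∧ (∀ k : ℤ, b k ≠ 0 → m ≤ k) ∧ c = a + b) :
    ∀ N : ℕ, ∀ c ∈ C, ∀ m : ℤ,
      (∀ k : ℤ, c k ≠ 0 → m ≤ k ∧ k ≤ m + (L : ℤ) + (N : ℤ)) →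
      ∃ (n : ℕ) (f : Fin n → Π₀ k, G k),
        (∀ i, f i ∈ C ∧ ∃ k0 : ℤ, ∀ j : ℤ, f i j ≠ 0 → k0 ≤ j ∧ j ≤ k0 + (L : ℤ)) ∧
        c = ∑ i, f i := by
  intro N
  induction N with
  | zero =>
    intro c hc m hm
    refine ⟨1, fun _ => c, ?_, by simp⟩
    intro i
    refine ⟨hc, m, fun j hj => ?_⟩
    have := hm j hj
    omega
  | succ N ih =>
    intro c hc m hm
    obtain ⟨a, b, haC, hbC, ha, hb, hab⟩ := hctrl (m + 1) c hc
    have hak : ∀ k : ℤ, a k ≠ 0 → m ≤ k ∧ k ≤ m + (L : ℤ) := by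
      intro k hk
      constructor
      · by_contra h
        push_neg at h
        have hck : c k = 0 := by
          by_contra hck
          have := (hm k hck).1; omega
        have hbk : b k = 0 := by
          by_contra hbk
          have := hb k hbk; omega
        have : c k = a k + b k := by rw [hab]; simp
        rw [hck, hbk] at this
        exact hk (by simpa using this.symm)
      · have := ha k hk; omega
    have hbk : ∀ k : ℤ, b k ≠ 0 → (m + 1) ≤ k ∧ k ≤ (m + 1) + (L : ℤ) + (N : ℤ) := by
      intro k hk
      refine ⟨hb k hk, ?_⟩
      by_contra h
      push_neg at h
      have hck : c k = 0 := by
        by_contra hck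
        have := (hm k hck).2; push_cast at this; omega
      have hak' : a k = 0 := by
        by_contra hak'
        have := (hak k hak').2; omega
      have : c k = a k + b k := by rw [hab]; simp
      rw [hck, hak'] at this
      exact hk (by simpa using this.symm)
    obtain ⟨n, f, hf, hsum⟩ := ih b hbC (m + 1) hbk
    refine ⟨n + 1, Fin.cons a f, ?_, ?_⟩
    · intro i
      refine Fin.cases ?_ ?_ i
      · exact ⟨haC, m, hak⟩
      · intro j; simpa using hf j
    · rw [Fin.sum_cons, hab, hsum]
  
/-- L-controllability implies L-finiteness for group codes in the direct sum
`W_f = ⨁_{k∈ℤ} G k`: if for every `m` one has `C = C_{:(m+L)^-} + C_{:m^+}`, then every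
codeword of `C` is a finite sum of codewords each supported in some interval of length
`L + 1`. -/
theorem stmt15 (G : ℤ → Type*) [∀ k, AddCommGroup (G k)]
    (C : AddSubgroup (Π₀ k, G k)) (L : ℕ)
    (hctrl : ∀ m : ℤ, ∀ c ∈ C, ∃ a b : Π₀ k, G k, a ∈ C ∧ b ∈ C ∧
      (∀ k : ℤ, a k ≠ 0 → k < m + (L : ℤ)) ∧ (∀ k : ℤ, b k ≠ 0 → m ≤ k) ∧ c = a + b) :
    ∀ c ∈ C, ∃ (n : ℕ) (f : Fin n → Π₀ k, G k),
      (∀ i, f i ∈ C ∧ ∃ k0 : ℤ, ∀ j : ℤ, f i j ≠ 0 → k0 ≤ j ∧ j ≤ k0 + (L : ℤ)) ∧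
      c = ∑ i, f i := by
  classical
  intro c hc
  by_cases h0 : c.support.Nonempty
  · set m := c.support.min' h0 with hm
    set M := c.support.max' h0 with hM
    have hmM : m ≤ M := Finset.min'_le _ _ (c.support.max'_mem h0)
    refine aux15 G C L hctrl (M - m).toNat c hc m ?_
    intro k hk
    have hk' : k ∈ c.support := DFinsupp.mem_support_iff.mpr hk
    have h1 : m ≤ k := Finset.min'_le _ _ hk'
    have h2 : k ≤ M := Finset.le_max' _ _ hk'
    have : ((M - m).toNat : ℤ) = M - m := Int.toNat_of_nonneg (by omega)
    omega
  · have : c = 0 := by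
      ext k
      by_contra hk
      exact h0 ⟨k, DFinsupp.mem_support_iff.mpr hk⟩
    refine ⟨0, fun i => i.elim0, fun i => i.elim0, by simp [this]⟩
end

section
/- Let C be a subgroup of a product W = ∏_{k∈I} G_k of abelian groups with I ⊆ ℤ, and let m < n. Then C is [m,n)-controllable (C_{|I∖[m,n)} = C_{|m^-} × C_{|n^+}, i.e., any past restriction and any future restriction of codewords can be realized jointly by a single codeword) if and only if C = C_{:n^-} + C_{:m^+}, where C_{:n^-} (resp. C_{:m^+}) is the subcode of C supported on times < n (resp. ≥ m). -/
/-- Equivalence of the two `[m,n)`-controllability tests for a group code `C` in a product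
sequence space on a time axis `I ⊆ ℤ`: any past restriction and any future restriction of
codewords can be realized jointly by a single codeword if and only if
`C = C_{:n^-} + C_{:m^+}`. -/
theorem stmt16 (I : Set ℤ) (G : I → Type*) [∀ k, AddCommGroup (G k)]
    (C : AddSubgroup (∀ k, G k)) (m n : ℤ) (hmn : m < n) :
    (∀ c ∈ C, ∀ c' ∈ C, ∃ c'' ∈ C,
        (∀ k : I, (k : ℤ) < m → c'' k = c k) ∧ ∀ k : I, n ≤ (k : ℤ) → c'' k = c' k)
      ↔ ∀ c ∈ C, ∃ a b, a ∈ C ∧ b ∈ C ∧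
          (∀ k : I, a k ≠ 0 → (k : ℤ) < n) ∧ (∀ k : I, b k ≠ 0 → m ≤ (k : ℤ)) ∧
          c = a + b := by
  constructor
  · intro h c hc
    obtain ⟨c'', hc'', h1, h2⟩ := h c hc 0 C.zero_mem
    refine ⟨c'', c - c'', hc'', C.sub_mem hc hc'', ?_, ?_, by abel⟩
    · intro k hk
      by_contra hkn
      exact hk (by simpa using h2 k (le_of_not_gt hkn))
    · intro k hk
      by_contra hkm
      exact hk (by simp [h1 k (lt_of_not_ge hkm)])
  · intro h c hc c' hc'
    obtain ⟨a, b, ha, hb, han, hbm, hab⟩ := h (c' - c) (C.sub_mem hc' hc)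
    refine ⟨c + b, C.add_mem hc hb, ?_, ?_⟩
    · intro k hk
      have : b k = 0 := by
        by_contra hkb
        exact absurd (hbm k hkb) (not_le.mpr hk)
      simp [this]
    · intro k hk
      have ha0 : a k = 0 := by
        by_contra hka
        exact absurd (han k hka) (not_lt.mpr hk)
      have := congrFun hab k
      simp only [Pi.sub_apply, Pi.add_apply, ha0, zero_add] at this
      simp only [Pi.add_apply, ← this]
      abel
end

section
/- Let C and C^⊥ be dual subgroups of ∏_{k∈I} G_k and ⨁_{k∈I} Ĝ_k respectively, with I finite and all G_k finite abelian, and let m < n with [m,n) ⊆ I. Then C is [m,n)-controllable if and only if C^⊥ is [m,n)-observable. -/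
/-- Characters into `ℚ/ℤ` vanishing on a subgroup detect membership in that subgroup. -/
lemma stmt18_mem_of_forall_char {A : Type*} [AddCommGroup A] (H : AddSubgroup A) (a : A)
    (h : ∀ φ : A →+ AddCircle (1 : ℚ), (∀ x ∈ H, φ x = 0) → φ a = 0) : a ∈ H := by
  rw [← QuotientAddGroup.eq_zero_iff]
  apply CharacterModule.eq_zero_of_character_apply
  intro c
  have := h ((c : (A ⧸ H) →+ AddCircle (1 : ℚ)).comp (QuotientAddGroup.mk' H))
    (fun x hx => by
      show c (x : A ⧸ H) = 0
      rw [(QuotientAddGroup.eq_zero_iff x).2 hx]; exact map_zero c)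
  exact this

/-- Strong controllability/observability duality (finite case): if `C` and `Cp = C^⊥` are
dual subgroups of `∏_{k∈I} G k` and `∏_{k∈I} Ĝ k` under the pairing
`⟨x, w⟩ = Σₖ x k (w k)`, with `I` a finite subset of ℤ containing `[m,n)`, then `C` is
`[m,n)`-controllable if and only if `C^⊥` is `[m,n)`-observable. -/
theorem stmt18 (I : Finset ℤ) (G : ↥I → Type*) [∀ k, AddCommGroup (G k)]
    [∀ k, Fintype (G k)]
    (C : AddSubgroup (∀ k, G k))
    (Cp : AddSubgroup (∀ k : ↥I, G k →+ AddCircle (1 : ℚ)))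
    (hCp : (Cp : Set (∀ k : ↥I, G k →+ AddCircle (1 : ℚ))) =
      {x | ∀ c ∈ C, ∑ k, x k (c k) = 0})
    (m n : ℤ) (hmn : m < n) (hsub : ∀ k : ℤ, m ≤ k → k < n → k ∈ I) :
    (∀ c ∈ C, ∀ c' ∈ C, ∃ c'' ∈ C,
        (∀ k : ↥I, (k : ℤ) < m → c'' k = c k) ∧ ∀ k : ↥I, n ≤ (k : ℤ) → c'' k = c' k)
      ↔ ∀ x ∈ Cp, (∀ k : ↥I, m ≤ (k : ℤ) → (k : ℤ) < n → x k = 0) →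
          ∃ a b, a ∈ Cp ∧ b ∈ Cp ∧ (∀ k : ↥I, a k ≠ 0 → (k : ℤ) < m) ∧
            (∀ k : ↥I, b k ≠ 0 → n ≤ (k : ℤ)) ∧ x = a + b := by
  classical
  have memCp : ∀ x, x ∈ Cp ↔ ∀ c ∈ C, ∑ k, x k (c k) = 0 := by
    intro x
    rw [← SetLike.mem_coe, hCp]; rfl
  constructor
  · -- controllable ⇒ observable
    intro hctrl x hx hxP
    set a : ∀ k : ↥I, G k →+ AddCircle (1 : ℚ) :=
      fun k => if (k : ℤ) < m then x k else 0 with ha_def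
    have ha : a ∈ Cp := by
      rw [memCp]
      intro c hc
      obtain ⟨c'', hc'', h1, h2⟩ := hctrl c hc 0 C.zero_mem
      have : ∑ k, a k (c k) = ∑ k, x k (c'' k) := by
        apply Finset.sum_congr rfl
        intro k _
        by_cases hk : (k : ℤ) < m
        · simp [ha_def, hk, h1 k hk]
        · rcases lt_or_ge (k : ℤ) n with hkn | hkn
          · simp [ha_def, hk, hxP k (le_of_not_gt hk) hkn]
          · simp [ha_def, hk, h2 k hkn]
      rw [this]
      exact (memCp x).1 hx c'' hc''
    refine ⟨a, x - a, ha, Cp.sub_mem hx ha, ?_, ?_, by abel⟩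
    · intro k hk
      by_contra hkm
      exact hk (by simp [ha_def, hkm])
    · intro k hk
      by_contra hkn
      apply hk
      rcases lt_or_ge (k : ℤ) m with hkm | hkm
      · simp [ha_def, hkm]
      · have hklt : (k : ℤ) < n := lt_of_not_ge hkn
        simp [ha_def, not_lt.2 hkm, hxP k hkm hklt]
  · -- observable ⇒ controllable
    intro hobs c hc c' hc'
    set w : ∀ k : ↥I, G k := fun k => if (k : ℤ) < m then c k else c' k with hw_def
    -- V : elements supported on [m,n)
    set V : AddSubgroup (∀ k : ↥I, G k) :=
      { carrier := {d | ∀ k : ↥I, ((k : ℤ) < m ∨ n ≤ (k : ℤ)) → d k = 0}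
        add_mem' := fun hd he k hk => by
          simp only [Pi.add_apply]
          rw [hd k hk, he k hk, add_zero]
        zero_mem' := fun k _ => rfl
        neg_mem' := fun hd k hk => by
          simp only [Pi.neg_apply]
          rw [hd k hk, neg_zero] } with hV_def
    have hw : w ∈ C ⊔ V := by
      apply stmt18_mem_of_forall_char
      intro φ hφ
      set x : ∀ k : ↥I, G k →+ AddCircle (1 : ℚ) :=
        fun k => AddMonoidHom.mk' (fun g => φ (Pi.single k g))
          (fun g g' => by rw [← map_add, ← Pi.single_add]) with hx_def
      have hsum : ∀ d : ∀ k : ↥I, G k, ∑ k, x k (d k) = φ d := by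
        intro d
        calc ∑ k, x k (d k) = ∑ k, φ (Pi.single k (d k)) := rfl
          _ = φ (∑ k, Pi.single k (d k)) := (map_sum φ _ _).symm
          _ = φ d := by rw [Finset.univ_sum_single]
      have hxCp : x ∈ Cp := by
        rw [memCp]
        intro e he
        rw [hsum e]
        exact hφ e (AddSubgroup.mem_sup_left he)
      have hxP : ∀ k : ↥I, m ≤ (k : ℤ) → (k : ℤ) < n → x k = 0 := by
        intro k hk1 hk2
        ext g
        have hmem : Pi.single k g ∈ V := by
          intro k' hk'
          apply Pi.single_eq_of_ne
          intro hkk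
          rw [hkk] at hk'
          rcases hk' with h | h
          · exact absurd hk1 (not_le.2 h)
          · exact absurd hk2 (not_lt.2 h)
        simpa [hx_def] using hφ _ (AddSubgroup.mem_sup_right hmem)
      obtain ⟨a, b, haCp, hbCp, hsa, hsb, hab⟩ := hobs x hxCp hxP
      have h1 : ∑ k, a k (w k) = ∑ k, a k (c k) := by
        apply Finset.sum_congr rfl
        intro k _
        by_cases hk : (k : ℤ) < m
        · simp [hw_def, hk]
        · have : a k = 0 := by
            by_contra h
            exact hk (hsa k h)
          simp [this]
      have h2 : ∑ k, b k (w k) = ∑ k, b k (c' k) := by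
        apply Finset.sum_congr rfl
        intro k _
        by_cases hk : b k = 0
        · simp [hk]
        · have hkn := hsb k hk
          have : ¬ (k : ℤ) < m := not_lt.2 (le_trans hmn.le hkn)
          simp [hw_def, this]
      have : φ w = ∑ k, a k (w k) + ∑ k, b k (w k) := by
        rw [← hsum w, hab, ← Finset.sum_add_distrib]
        rfl
      rw [this, h1, h2, (memCp a).1 haCp c hc, (memCp b).1 hbCp c' hc', add_zero]
    obtain ⟨y, hy, z, hz, hyz⟩ := AddSubgroup.mem_sup.1 hw
    refine ⟨y, hy, ?_, ?_⟩
    · intro k hk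
      have h1 : y k + z k = w k := congrFun hyz k
      have h2 : z k = 0 := hz k (Or.inl hk)
      rw [h2, add_zero] at h1
      rw [h1, hw_def]
      simp [hk]
    · intro k hk
      have h1 : y k + z k = w k := congrFun hyz k
      have h2 : z k = 0 := hz k (Or.inr hk)
      rw [h2, add_zero] at h1
      rw [h1, hw_def]
      simp [not_lt.2 (le_trans hmn.le hk)]
end

section
/- Let C be a subgroup of ∏_{k∈I} G_k with I a finite interval of ℤ, interpreted cyclically. For m < n in I, define the end-around controller granule Γ_{[n,m]}(C) = C_{:[n,m]} / (C_{:[n,m)} + C_{:(n,m]}), where [n,m] = I ∖ (m,n) is the end-around interval and C_{:S} denotes the subcode supported on S. Then Γ_{[n,m]}(C) is isomorphic to the quotient F^{n−m−1,n}(C) / F^{n−m,n}(C) of dual first-output groups, where F^{j,k}(C) = (C_{:I∖[k−j,k)})_{|{k}} is the set of time-k symbols of codewords vanishing on [k−j, k). -/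
lemma mem_restrictHom_ker {I : Type*} (G : I → Type*) [∀ k, AddCommGroup (G k)]
    (p : I → Prop) (w : ∀ k, G k) :
    w ∈ (restrictHom G p).ker ↔ ∀ k : I, p k → w k = 0 := by
  constructor
  · intro h k hk
    exact congrFun h ⟨k, hk⟩
  · intro h
    funext k
    exact h k.1 k.2

/-- End-around theorem (first isomorphism step): on a finite time axis `I ⊆ ℤ` interpreted
cyclically, with `m < n`, let `A = C_{:[n,m]}` (codewords vanishing on the open interval
`(m,n)`), `A1 = C_{:[n,m)}` (vanishing on `[m,n)`), and `A2 = C_{:(n,m]}` (vanishing on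
`(m,n]`). Then the end-around controller granule `Γ_{[n,m]}(C) = A / (A1 + A2)` is
isomorphic to the quotient `F^{n−m−1,n}(C) / F^{n−m,n}(C)` of dual first-output groups,
where `F^{n−m−1,n}(C)` (resp. `F^{n−m,n}(C)`) is the image of `A` (resp. `A1`) under
evaluation at time `n`. -/
theorem stmt19 (I : Finset ℤ) (G : ↥I → Type*) [∀ k, AddCommGroup (G k)]
    (C : AddSubgroup (∀ k, G k)) (m n : ℤ) (hmn : m < n) (hn : n ∈ I) :
    ∀ A A1 A2 : AddSubgroup (∀ k, G k),
      A = C ⊓ (restrictHom G fun k : ↥I => m < (k : ℤ) ∧ (k : ℤ) < n).ker →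
      A1 = C ⊓ (restrictHom G fun k : ↥I => m ≤ (k : ℤ) ∧ (k : ℤ) < n).ker →
      A2 = C ⊓ (restrictHom G fun k : ↥I => m < (k : ℤ) ∧ (k : ℤ) ≤ n).ker →
      Nonempty ((↥A ⧸ ((A1 ⊔ A2).addSubgroupOf A)) ≃+
        (↥(A.map (Pi.evalAddMonoidHom G ⟨n, hn⟩)) ⧸
          ((A1.map (Pi.evalAddMonoidHom G ⟨n, hn⟩)).addSubgroupOf
            (A.map (Pi.evalAddMonoidHom G ⟨n, hn⟩))))) := by
  intro A A1 A2 hA hA1 hA2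
  set E := Pi.evalAddMonoidHom G (⟨n, hn⟩ : ↥I) with hE
  let g : ↥A →+ ↥(A.map E) :=
    (E.comp A.subtype).codRestrict _ (fun a => ⟨a.1, a.2, rfl⟩)
  let f := (QuotientAddGroup.mk' ((A1.map E).addSubgroupOf (A.map E))).comp g
  have hfsurj : Function.Surjective f := by
    intro x
    obtain ⟨⟨y, hy⟩, rfl⟩ := QuotientAddGroup.mk'_surjective _ x
    obtain ⟨a, ha, rfl⟩ := hy
    exact ⟨⟨a, ha⟩, rfl⟩
  have hker : f.ker = (A1 ⊔ A2).addSubgroupOf A := by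
    ext a
    simp only [AddMonoidHom.mem_ker, f, AddMonoidHom.comp_apply,
      QuotientAddGroup.mk'_apply, QuotientAddGroup.eq_zero_iff,
      AddSubgroup.mem_addSubgroupOf]
    have hga : ((g a : ↥(A.map E)) : G ⟨n, hn⟩) = a.1 ⟨n, hn⟩ := rfl
    constructor
    · intro h
      have hEa : E a.1 ∈ A1.map E := h
      obtain ⟨a1, ha1, heq⟩ := hEa
      have haA : a.1 ∈ C ⊓ (restrictHom G fun k : ↥I => m < (k : ℤ) ∧ (k : ℤ) < n).ker := by
        rw [← hA]; exact a.2
      have ha1' : a1 ∈ C ⊓ (restrictHom G fun k : ↥I => m ≤ (k : ℤ) ∧ (k : ℤ) < n).ker := by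
        rw [← hA1]; exact ha1
      have hmem2 : a.1 - a1 ∈ A2 := by
        rw [hA2, AddSubgroup.mem_inf]
        rw [AddSubgroup.mem_inf] at haA ha1'
        refine ⟨sub_mem haA.1 ha1'.1, ?_⟩
        rw [mem_restrictHom_ker]
        intro k hk
        rcases lt_or_eq_of_le hk.2 with hlt | heqn
        · have h1 : a.1 k = 0 := (mem_restrictHom_ker _ _ _).mp haA.2 k ⟨hk.1, hlt⟩
          have h2 : a1 k = 0 := (mem_restrictHom_ker _ _ _).mp ha1'.2 k ⟨le_of_lt hk.1, hlt⟩
          simp [h1, h2]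
        · have hkn : k = ⟨n, hn⟩ := Subtype.ext heqn
          subst hkn
          have : a1 ⟨n, hn⟩ = a.1 ⟨n, hn⟩ := heq
          simp [this]
      have : a.1 = a1 + (a.1 - a1) := by abel
      rw [this]
      exact add_mem (AddSubgroup.mem_sup_left ha1) (AddSubgroup.mem_sup_right hmem2)
    · intro h
      obtain ⟨a1, ha1, a2, ha2, heq⟩ := AddSubgroup.mem_sup.mp h
      have ha2' : a2 ∈ C ⊓ (restrictHom G fun k : ↥I => m < (k : ℤ) ∧ (k : ℤ) ≤ n).ker := by
        rw [← hA2]; exact ha2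
      rw [AddSubgroup.mem_inf] at ha2'
      have h2 : a2 ⟨n, hn⟩ = 0 :=
        (mem_restrictHom_ker _ _ _).mp ha2'.2 ⟨n, hn⟩ ⟨hmn, le_refl n⟩
      show E a.1 ∈ A1.map E
      refine ⟨a1, ha1, ?_⟩
      have : a.1 ⟨n, hn⟩ = a1 ⟨n, hn⟩ + a2 ⟨n, hn⟩ := by rw [← heq]; rfl
      simp only [hE, Pi.evalAddMonoidHom_apply, this, h2, add_zero]
  exact ⟨(QuotientAddGroup.quotientAddEquivOfEq hker.symm).trans
    (QuotientAddGroup.quotientKerEquivOfSurjective f hfsurj)⟩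
end
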